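/- arXiv:1309.4418 — 7 statements merged into one kernel-verified Lean document; each statement's English description precedes it below -/
import Mathlib

section
/- Let 𝔤 be a finite-dimensional complex semisimple Lie algebra with Killing form κ, 𝔥 ⊆ 𝔤 a Cartan subalgebra, x₀ ∈ 𝔥, and H ∈ 𝔥 a regular element (α(H) ≠ 0 for every root α). Then the bilinear form B(u,v) = κ(⁅x₀, ⁅H, u⁆⁆, v) restricted to the subspace V = range(ad(x₀)) is nondegenerate: if u ∈ V satisfies B(u,v) = 0 for all v ∈ V, then u = 0. -/
/-!
By invariance and nondegeneracy of `κ`, the hypothesis says `(ad x₀)² (ad h u) = 0`. As `ad x₀` is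
semisimple, its kernel meets its range trivially, so `ad x₀ (ad h u) = ad h (ad x₀ u) = 0`. Since
`h` is regular, the kernel of `ad h` lies in the zero root space `H`, which `ad x₀` kills; hence
`(ad x₀)² u = 0`, and as `u` lies in the range of `ad x₀`, semisimplicity gives `u = 0`.
-/

open LieAlgebra LieModule

lemma Module.End.IsFinitelySemisimple.apply_eq_zero_of_apply_apply_eq_zero
    {R M : Type*} [CommRing R] [AddCommGroup M] [Module R M] {f : Module.End R M}
    (hf : f.IsFinitelySemisimple) {y : M} (hy : f (f y) = 0) : f y = 0 := by
  have hmax : y ∈ f.maxGenEigenspace 0 :=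
    (f.mem_maxGenEigenspace 0 y).mpr ⟨2, by simpa [pow_two] using hy⟩
  rw [hf.maxGenEigenspace_eq_eigenspace, Module.End.eigenspace_zero] at hmax
  exact hmax

lemma LieModule.genWeightSpaceOf_zero_le_genWeightSpace_zero
    {K L M : Type*} [Field K] [LieRing L] [LieAlgebra K L] [LieRing.IsNilpotent L]
    [AddCommGroup M] [Module K M] [LieRingModule L M] [LieModule K L M]
    [FiniteDimensional K M] [IsTriangularizable K L M]
    {x : L} (hx : ∀ χ : Weight K L M, χ.IsNonZero → χ x ≠ 0) :
    genWeightSpaceOf M (0 : K) x ≤ genWeightSpace M 0 := by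
  rw [eq_iSup_inf_genWeightSpace K L M (genWeightSpaceOf M (0 : K) x)]
  refine iSup_le fun χ ↦ ?_
  by_cases hχ : χ.IsZero
  · rw [show (χ : L → K) = 0 from hχ]
    exact inf_le_right
  · have hdisj := disjoint_genWeightSpaceOf K L M (x := x) (hx χ hχ).symm
    exact (hdisj.mono_right (genWeightSpace_le_genWeightSpaceOf M x χ)).eq_bot.trans_le bot_le

lemma LieAlgebra.IsKilling.ker_ad_le_ker_ad_of_forall_weight_ne_zero
    {K L : Type*} [Field K] [PerfectField K] [LieRing L] [LieAlgebra K L] [FiniteDimensional K L]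
    [IsKilling K L] {H : LieSubalgebra K L} [H.IsCartanSubalgebra] [IsTriangularizable K H L]
    {h : H} (hreg : ∀ α : Weight K H L, α.IsNonZero → α h ≠ 0) (x : H) :
    LinearMap.ker (ad K L h) ≤ LinearMap.ker (ad K L x) := by
  intro y hy
  have hy₀ : y ∈ rootSpace H 0 := by
    refine genWeightSpaceOf_zero_le_genWeightSpace_zero hreg ?_
    exact (mem_genWeightSpaceOf L (0 : K) h y).mpr ⟨1, by simpa using hy⟩
  simpa using lie_eq_smul_of_mem_rootSpace hy₀ x

lemma LieAlgebra.IsKilling.lie_eq_zero_of_forall_mem_range_ad_killingForm_eq_zero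
    {R L : Type*} [CommRing R] [LieRing L] [LieAlgebra R L] [IsKilling R L] {x a : L}
    (ha : ∀ v ∈ LinearMap.range (ad R L x), killingForm R L a v = 0) : ⁅x, a⁆ = 0 := by
  refine (IsKilling.killingForm_nondegenerate R L).1 _ fun w ↦ ?_
  rw [traceForm_apply_lie_apply', neg_eq_zero]
  exact ha _ ⟨w, rfl⟩

/-- Let `𝔤` be a finite-dimensional complex semisimple Lie algebra with Killing form `κ`,
`𝔥` a Cartan subalgebra, `x₀ ∈ 𝔥` and `H ∈ 𝔥` regular (i.e. `α H ≠ 0` for every root `α`).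
Then the bilinear form `B(u,v) = κ(⁅x₀, ⁅H, u⁆⁆, v)` is nondegenerate on the
subspace `V = range (ad x₀)`: if `u ∈ V` pairs to zero with every `v ∈ V`, then `u = 0`. -/
theorem hessian_nondegenerate_on_range_ad
    (L : Type*) [LieRing L] [LieAlgebra ℂ L] [Module.Finite ℂ L]
    [LieAlgebra.IsKilling ℂ L]
    (H : LieSubalgebra ℂ L) [H.IsCartanSubalgebra]
    (x₀ : L) (hx₀ : x₀ ∈ H)
    (h : L) (hh : h ∈ H)
    (hreg : ∀ α : LieModule.Weight ℂ H L, α.IsNonZero → α ⟨h, hh⟩ ≠ 0) :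
    ∀ u ∈ LinearMap.range (LieAlgebra.ad ℂ L x₀),
      (∀ v ∈ LinearMap.range (LieAlgebra.ad ℂ L x₀),
        killingForm ℂ L ⁅x₀, ⁅h, u⁆⁆ v = 0) → u = 0 := by
  rintro - ⟨z, rfl⟩ hB
  have hss : (ad ℂ L x₀).IsFinitelySemisimple :=
    (IsKilling.isSemisimple_ad_of_mem_isCartanSubalgebra hx₀).isFinitelySemisimple
  have hcomm : ⁅h, x₀⁆ = 0 := congrArg Subtype.val (trivial_lie_zero H H ⟨h, hh⟩ ⟨x₀, hx₀⟩)
  have hker := IsKilling.ker_ad_le_ker_ad_of_forall_weight_ne_zero hreg ⟨x₀, hx₀⟩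
  have h₁ : ⁅x₀, ⁅x₀, ⁅h, ⁅x₀, z⁆⁆⁆⁆ = 0 :=
    IsKilling.lie_eq_zero_of_forall_mem_range_ad_killingForm_eq_zero hB
  have h₂ : ⁅x₀, ⁅h, ⁅x₀, z⁆⁆⁆ = 0 := hss.apply_eq_zero_of_apply_apply_eq_zero h₁
  have h₃ : ⁅h, ⁅x₀, ⁅x₀, z⁆⁆⁆ = 0 := by
    rw [leibniz_lie, hcomm, zero_lie, zero_add, h₂]
  have h₄ : ⁅x₀, ⁅x₀, ⁅x₀, z⁆⁆⁆ = 0 := hker h₃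
  exact hss.apply_eq_zero_of_apply_apply_eq_zero (hss.apply_eq_zero_of_apply_apply_eq_zero h₄)
end

section
/- Let H₀ be an n×n complex diagonal matrix. Then the adjoint orbit O(H₀) = {g H₀ g⁻¹ : g ∈ GL(n,ℂ)}, i.e. the set of all matrices similar to H₀, is a closed subset of the space of n×n complex matrices. -/
attribute [local instance] Matrix.frobeniusNormedAddCommGroup

/-!
A matrix is similar to `diagonal d` iff it is diagonalizable with the same eigenvalues, counted
with multiplicity. Over `ℂ` both conditions are closed: diagonalizability is equivalent to being
annihilated by the squarefree polynomial `∏_{a ∈ range d} (X - a)`, and the multiset of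
eigenvalues is the root multiset of the characteristic polynomial, whose values
`det (t • 1 - x)` depend continuously on `x`.
-/

open Polynomial Matrix Module

theorem LinearMap.toMatrix_eq_diagonal_of_apply_basis {R M ι : Type*} [CommRing R]
    [AddCommGroup M] [Module R M] [Fintype ι] [DecidableEq ι] {f : M →ₗ[R] M}
    (b : Basis ι R M) (μ : ι → R)
    (h : ∀ i, f (b i) = μ i • b i) : LinearMap.toMatrix b b f = diagonal μ := by
  ext i j
  rcases eq_or_ne i j with rfl | hij
  · simp [LinearMap.toMatrix_apply, h]
  · simp [LinearMap.toMatrix_apply, h, hij]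

theorem Matrix.exists_units_conj_diagonal_of_basis {R n : Type*} [CommRing R] [Fintype n]
    [DecidableEq n] {x : Matrix n n R} (b : Basis n R (n → R)) (μ : n → R)
    (h : ∀ i, x *ᵥ b i = μ i • b i) :
    ∃ u : (Matrix n n R)ˣ, x = u * diagonal μ * u⁻¹ := by
  let e := Pi.basisFun R n
  refine ⟨⟨e.toMatrix b, b.toMatrix e, e.toMatrix_mul_toMatrix_flip b,
    b.toMatrix_mul_toMatrix_flip e⟩, ?_⟩
  rw [← LinearMap.toMatrix_eq_diagonal_of_apply_basis b μ h (f := toLin' x),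
    Units.val_mk, Units.inv_mk, basis_toMatrix_mul_linearMap_toMatrix_mul_basis_toMatrix,
    LinearMap.toMatrix_eq_toMatrix', LinearMap.toMatrix'_toLin']

theorem Module.End.IsSemisimple.exists_basis_apply_eq_smul {K V ι : Type*} [Field K]
    [IsAlgClosed K] [AddCommGroup V] [Module K V] [FiniteDimensional K V] [Fintype ι] {f : End K V}
    (hf : f.IsSemisimple) (hι : Fintype.card ι = finrank K V) :
    ∃ (b : Basis ι K V) (μ : ι → K), ∀ i, f (b i) = μ i • b i := by
  classical
  have hdecomp : DirectSum.IsInternal f.eigenspace :=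
    DirectSum.isInternal_submodule_of_iSupIndep_of_iSup_eq_top f.eigenspaces_iSupIndep
      hf.iSup_eigenspace_eq_top
  let v μ := finBasis K (f.eigenspace μ)
  let b := hdecomp.collectedBasis v
  have := FiniteDimensional.fintypeBasisIndex b
  let σ := Fintype.equivOfCardEq (hι.trans (finrank_eq_card_basis b)).symm
  refine ⟨b.reindex σ, fun i ↦ (σ.symm i).1, fun i ↦ ?_⟩
  rw [Basis.reindex_apply]
  exact End.mem_eigenspace_iff.mp (hdecomp.collectedBasis_mem v (σ.symm i))

theorem Fintype.exists_equiv_comp_eq_of_map_univ_eq {ι α : Type*} [Fintype ι] [DecidableEq α]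
    {f g : ι → α} (h : Finset.univ.val.map f = Finset.univ.val.map g) :
    ∃ σ : ι ≃ ι, g ∘ σ = f := by
  have hcard (a : α) : Fintype.card {i // f i = a} = Fintype.card {i // g i = a} := by
    simpa [Fintype.card_subtype, Multiset.count_map, Finset.filter_val, Finset.card_def,
      eq_comm] using congrArg (Multiset.count a) h
  exact ⟨Equiv.ofFiberEquiv fun a ↦ Fintype.equivOfCardEq (hcard a),
    funext (Equiv.ofFiberEquiv_map _)⟩

theorem Polynomial.map_univ_eq_of_prod_X_sub_C_eq {R ι : Type*} [CommRing R] [IsDomain R]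
    [Fintype ι] {f g : ι → R} (h : ∏ i, (X - C (f i)) = ∏ i, (X - C (g i))) :
    Finset.univ.val.map f = Finset.univ.val.map g := by
  have hroots (f : ι → R) : (∏ i, (X - C (f i))).roots = Finset.univ.val.map f := by
    conv_rhs => rw [← roots_multiset_prod_X_sub_C (Finset.univ.val.map f), Multiset.map_map]
    rfl
  rw [← hroots f, ← hroots g, h]

theorem Polynomial.aeval_units_conj {R A : Type*} [CommSemiring R] [Semiring A] [Algebra R A]
    (p : R[X]) (u : Aˣ) (a : A) : aeval (u * a * ↑u⁻¹ : A) p = u * aeval a p * ↑u⁻¹ :=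
  aeval_algHom_apply (MulSemiringAction.toAlgEquiv R A (ConjAct.toConjAct u)).toAlgHom a p

theorem Matrix.aeval_diagonal {R n : Type*} [CommSemiring R] [Fintype n] [DecidableEq n]
    (p : R[X]) (d : n → R) : aeval (diagonal d) p = diagonal fun i ↦ p.eval (d i) := by
  simpa [aeval_pi_apply] using aeval_algHom_apply (diagonalAlgHom R (n := n)) d p

theorem Matrix.isClosed_setOf_charpoly_eq {R n : Type*} [CommRing R] [IsDomain R] [Infinite R]
    [TopologicalSpace R] [IsTopologicalRing R] [T2Space R] [Fintype n] [DecidableEq n]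
    (q : R[X]) : IsClosed {x : Matrix n n R | x.charpoly = q} := by
  have : {x : Matrix n n R | x.charpoly = q} = ⋂ t, {x | (scalar n t - x).det = q.eval t} := by
    ext x
    simp only [Set.mem_ofPred_eq, Set.mem_iInter, ← eval_charpoly]
    exact ⟨fun h t ↦ h ▸ rfl, Polynomial.funext⟩
  rw [this]
  exact isClosed_iInter fun t ↦
    isClosed_eq (continuous_const.sub continuous_id).matrix_det continuous_const

theorem Matrix.exists_units_conj_diagonal_iff {K n : Type*} [Field K] [IsAlgClosed K]
    [DecidableEq K] [Fintype n] [DecidableEq n] (d : n → K) (x : Matrix n n K) :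
    (∃ u : (Matrix n n K)ˣ, x = u * diagonal d * (↑u⁻¹ : Matrix n n K)) ↔
      aeval x (∏ a ∈ Finset.univ.image d, (X - C a)) = 0 ∧
        x.charpoly = (diagonal d).charpoly := by
  set p := ∏ a ∈ Finset.univ.image d, (X - C a)
  constructor
  · rintro ⟨u, rfl⟩
    refine ⟨?_, by rw [coe_units_inv, charpoly_units_conj]⟩
    have hroot (i : n) : p.eval (d i) = 0 := by
      simp [p, eval_prod, Finset.prod_eq_zero_iff, sub_eq_zero]
    rw [aeval_units_conj, aeval_diagonal, funext hroot, diagonal_zero, mul_zero, zero_mul]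
  · rintro ⟨hp, hchar⟩
    have hss : End.IsSemisimple (toLinAlgEquiv' x) :=
      End.isSemisimple_of_squarefree_aeval_eq_zero
        (separable_prod_X_sub_C_iff'.mpr fun _ _ _ _ ↦ id).squarefree
        (by rw [← AlgEquiv.coe_toAlgHom, aeval_algHom_apply, hp, map_zero])
    obtain ⟨b, μ, hb⟩ := hss.exists_basis_apply_eq_smul (ι := n) (by simp)
    replace hb (i : n) : x *ᵥ b i = μ i • b i := hb i
    obtain ⟨u, hu⟩ := exists_units_conj_diagonal_of_basis b μ hb
    obtain ⟨σ, hσ⟩ := Fintype.exists_equiv_comp_eq_of_map_univ_eq <|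
      map_univ_eq_of_prod_X_sub_C_eq (f := μ) (g := d) <| by
        rw [← charpoly_diagonal μ, ← charpoly_diagonal d, ← hchar, hu, coe_units_inv,
          charpoly_units_conj]
    refine exists_units_conj_diagonal_of_basis (b.reindex σ) d fun i ↦ ?_
    rw [Basis.reindex_apply, hb, ← hσ, Function.comp_apply, Equiv.apply_symm_apply]

/-- The adjoint orbit `O(H₀) = {g H₀ g⁻¹ : g ∈ GL(n,ℂ)}` of a diagonal complex matrix
`H₀` is a closed subset of the space of `n×n` complex matrices. -/
theorem adjointOrbit_isClosed
    (n : ℕ) (d : Fin n → ℂ) :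
    IsClosed {x : Matrix (Fin n) (Fin n) ℂ |
      ∃ g : GL (Fin n) ℂ, x = (g : Matrix (Fin n) (Fin n) ℂ) * Matrix.diagonal d *
        ((g⁻¹ : GL (Fin n) ℂ) : Matrix (Fin n) (Fin n) ℂ)} := by
  classical
  simp only [exists_units_conj_diagonal_iff, Set.ofPred_and]
  exact (isClosed_eq (Polynomial.continuous_aeval _) continuous_const).inter
    (isClosed_setOf_charpoly_eq _)
end

section
/- Let H₀ be an n×n complex diagonal matrix and let H be an n×n real diagonal matrix whose diagonal entries are pairwise distinct (a regular element). Then for x in the adjoint orbit O(H₀) = {g H₀ g⁻¹ : g ∈ GL(n,ℂ)}, one has ⁅x, H⁆ = 0 if and only if there exists a permutation σ of {1,…,n} such that x is the diagonal matrix whose i-th diagonal entry is the σ(i)-th diagonal entry of H₀. (These are exactly the singular points of the height function f_H(x) = trace(xH) on the orbit, i.e. the Weyl-group orbit of H₀.) -/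
/-!
A matrix commuting with a diagonal matrix whose entries are pairwise distinct is itself diagonal,
since `(x * H - H * x) i j = (h j - h i) * x i j`. Conjugation preserves the characteristic
polynomial, and the roots of the characteristic polynomial of a diagonal matrix are its diagonal
entries with multiplicity; so the diagonal of `x` is a rearrangement of that of `H₀`.
-/

/-- The adjoint orbit of the diagonal matrix `H₀ = diagonal d`. -/
def adjointOrbit (n : ℕ) (d : Fin n → ℂ) : Set (Matrix (Fin n) (Fin n) ℂ) :=
  {x | ∃ g : GL (Fin n) ℂ, x = (g : Matrix (Fin n) (Fin n) ℂ) * Matrix.diagonal d *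
        ((g⁻¹ : GL (Fin n) ℂ) : Matrix (Fin n) (Fin n) ℂ)}

open Matrix Polynomial

theorem Matrix.eq_diagonal_diag_of_commute_diagonal {n R : Type*} [Fintype n] [DecidableEq n]
    [CommRing R] [NoZeroDivisors R] {A : Matrix n n R} {h : n → R} (hh : Function.Injective h)
    (hA : Commute A (diagonal h)) : A = diagonal A.diag := by
  ext i j
  obtain rfl | hij := eq_or_ne i j
  · simp
  have hcomm : A i j * h j = h i * A i j := by
    simpa [mul_diagonal, diagonal_mul] using congrFun (congrFun hA.eq i) j
  have hsub : (h j - h i) * A i j = 0 := by linear_combination hcomm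
  rw [diagonal_apply_ne _ hij]
  exact (mul_eq_zero.mp hsub).resolve_left (sub_ne_zero.mpr (hh.ne hij).symm)

theorem Matrix.roots_charpoly_diagonal {n R : Type*} [Fintype n] [DecidableEq n] [CommRing R]
    [IsDomain R] (d : n → R) : (diagonal d).charpoly.roots = Finset.univ.val.map d := by
  rw [charpoly_diagonal, Finset.prod_eq_multiset_prod]
  simpa [Multiset.map_map] using roots_multiset_prod_X_sub_C (Finset.univ.val.map d)

theorem Equiv.Perm.exists_eq_comp_of_map_univ_eq {ι α : Type*} [Fintype ι] {e d : ι → α}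
    (H : Finset.univ.val.map e = Finset.univ.val.map d) : ∃ σ : Equiv.Perm ι, e = d ∘ σ := by
  classical
  have hfiber (c : α) : Fintype.card { i // e i = c } = Fintype.card { i // d i = c } := by
    simpa [Multiset.count_map, Fintype.card_subtype, Finset.card, eq_comm] using
      congrArg (Multiset.count c) H
  let σ := Equiv.ofFiberEquiv fun c => Fintype.equivOfCardEq (hfiber c)
  exact ⟨σ, funext fun i => (Equiv.ofFiberEquiv_map _ i).symm⟩

theorem Matrix.charpoly_GL_conj {n R : Type*} [Fintype n] [DecidableEq n] [CommRing R]
    (g : GL n R) (M : Matrix n n R) :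
    ((g : Matrix n n R) * M * ((g⁻¹ : GL n R) : Matrix n n R)).charpoly = M.charpoly := by
  rw [coe_units_inv, charpoly_units_conj]

/-- Let `H₀ = diagonal d` be a complex diagonal matrix and `H = diagonal h` a real
regular diagonal matrix (pairwise distinct diagonal entries).  A point `x` of the
adjoint orbit `O(H₀)` satisfies `⁅x, H⁆ = 0` iff `x` is a diagonal matrix obtained from
`H₀` by permuting its diagonal entries, i.e. `x = diagonal (d ∘ σ)` for a permutation
`σ`.  These are the singular points of the height function `f_H(x) = trace (x * H)`. -/
theorem singular_points_of_height_function
    (n : ℕ) (d : Fin n → ℂ) (h : Fin n → ℝ) (hreg : Function.Injective h)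
    (x : Matrix (Fin n) (Fin n) ℂ) (hx : x ∈ adjointOrbit n d) :
    ⁅x, Matrix.diagonal (fun i => (h i : ℂ))⁆ = 0 ↔
      ∃ σ : Equiv.Perm (Fin n), x = Matrix.diagonal (fun i => d (σ i)) := by
  rw [← commute_iff_lie_eq]
  constructor
  · intro hcomm
    have hdiag : x = diagonal x.diag :=
      eq_diagonal_diag_of_commute_diagonal (Complex.ofReal_injective.comp hreg) hcomm
    have hroots : Finset.univ.val.map x.diag = Finset.univ.val.map d := by
      obtain ⟨g, hg⟩ := hx
      rw [← roots_charpoly_diagonal, ← roots_charpoly_diagonal, ← hdiag, hg, charpoly_GL_conj]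
    obtain ⟨σ, hσ⟩ := Equiv.Perm.exists_eq_comp_of_map_univ_eq hroots
    exact ⟨σ, hdiag.trans (congrArg diagonal hσ)⟩
  · rintro ⟨σ, rfl⟩
    exact commute_diagonal _ _
end

section
/- Let H₀ be an n×n complex diagonal matrix with trace 0, let O(H₀) = {g H₀ g⁻¹ : g ∈ GL(n,ℂ)}, and let S(H₀) be the set of diagonal matrices belonging to O(H₀). For every ε > 0 there exists Γ_ε > 0 such that: for every x ∈ O(H₀) with ‖x − y‖ > ε for all y ∈ S(H₀), one has ‖diag(x)‖ < Γ_ε · ‖x − diag(x)‖, where diag(x) is the diagonal matrix with the same diagonal entries as x. (The orbit is not asymptotic to the Cartan subalgebra of diagonal matrices.) -/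
attribute [local instance] Matrix.frobeniusNormedAddCommGroup

/-- The diagonal part of a square matrix. -/
def diagPart {n : ℕ} (x : Matrix (Fin n) (Fin n) ℂ) : Matrix (Fin n) (Fin n) ℂ :=
  Matrix.diagonal (fun i => x i i)

attribute [local instance] Matrix.frobeniusNormedSpace

/-!
Normalise `x ∈ O(H₀)` to `z = c • x` with `c = (1 + ‖x‖)⁻¹ = 1 - ‖z‖`. Then `z ∈ O(c • H₀)`,
so `det (t - z) = ∏ⱼ (t - c dⱼ)` depends continuously on `z`, and a diagonal matrix with this
characteristic polynomial is a permutation of `c • H₀`. If the bound failed, there would be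
points of the orbit, `ε`-far from `S(H₀)`, whose off-diagonal part is `o(‖x‖)`; a limit `a` of
their normalisations is then diagonal with `a ∈ O((1 - ‖a‖) • H₀)`. Since `O(0) = {0}`, we get
`‖a‖ ≠ 1`, so these points stay bounded and accumulate at a point of `S(H₀)`: a contradiction.
-/

open Matrix Filter Topology Polynomial Asymptotics

theorem Equiv.Perm.exists_comp_eq_of_map_univ_val_eq {ι α : Type*} [Fintype ι] {v w : ι → α}
    (h : Multiset.map v Finset.univ.val = Multiset.map w Finset.univ.val) :
    ∃ σ : Equiv.Perm ι, w ∘ σ = v := by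
  classical
  have hcard (u : ι → α) (c : α) :
      Fintype.card {i // u i = c} = Multiset.count c (Multiset.map u Finset.univ.val) := by
    simp [Fintype.card_subtype, Multiset.count_map, eq_comm, Finset.card_def]
  have hfiber (c : α) : Fintype.card {i // v i = c} = Fintype.card {i // w i = c} := by
    rw [hcard, hcard, h]
  exact ⟨Equiv.ofFiberEquiv fun c => Fintype.equivOfCardEq (hfiber c),
    funext (Equiv.ofFiberEquiv_map _)⟩

theorem Polynomial.roots_prod_X_sub_C_univ {ι R : Type*} [Fintype ι] [CommRing R] [IsDomain R]
    (w : ι → R) : (∏ i, (X - C (w i))).roots = Multiset.map w Finset.univ.val := by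
  have h := roots_multiset_prod_X_sub_C (Multiset.map w Finset.univ.val)
  rwa [Multiset.map_map, Function.comp_def, ← Finset.prod_eq_multiset_prod] at h

theorem Asymptotics.isLittleO_of_natCast_mul_norm_le {E F : Type*} [SeminormedAddGroup E]
    [Norm F] {f : ℕ → E} {g : ℕ → F} (h : ∀ k : ℕ, k * ‖f k‖ ≤ ‖g k‖) : f =o[atTop] g := by
  refine isLittleO_iff.2 fun c hc => ?_
  filter_upwards [eventually_ge_atTop ⌈c⁻¹⌉₊] with k hk
  have hk' : c⁻¹ ≤ k := (Nat.le_ceil _).trans (by exact_mod_cast hk)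
  calc ‖f k‖ = c * (c⁻¹ * ‖f k‖) := by field_simp
    _ ≤ c * (k * ‖f k‖) := by gcongr
    _ ≤ c * ‖g k‖ := by gcongr; exact h k

variable {n : ℕ}

theorem diagonal_comp_perm_mem_adjointOrbit (d : Fin n → ℂ) (σ : Equiv.Perm (Fin n)) :
    diagonal (d ∘ σ) ∈ adjointOrbit n d := by
  refine ⟨(permMatrixHom (n := Fin n) (R := ℂ)).toHomUnits σ⁻¹, ?_⟩
  rw [← map_inv, MonoidHom.coe_toHomUnits, MonoidHom.coe_toHomUnits, permMatrixHom_apply,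
    permMatrixHom_apply, inv_inv, PEquiv.toMatrix_toPEquiv_mul, PEquiv.mul_toMatrix_toPEquiv,
    submatrix_submatrix]
  exact (submatrix_diagonal_equiv d σ).symm

theorem diagPart_smul (c : ℂ) (x : Matrix (Fin n) (Fin n) ℂ) :
    diagPart (c • x) = c • diagPart x := by
  rw [diagPart, diagPart, ← diagonal_smul]
  rfl

theorem charpoly_eq_of_mem_adjointOrbit {d : Fin n → ℂ} {x : Matrix (Fin n) (Fin n) ℂ}
    (hx : x ∈ adjointOrbit n d) : x.charpoly = ∏ j, (X - C (d j)) := by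
  obtain ⟨g, rfl⟩ := hx
  rw [← charpoly_diagonal, coe_units_inv]
  exact charpoly_units_conj g (diagonal d)

theorem diagonal_mem_adjointOrbit_of_charpoly_eq {d v : Fin n → ℂ}
    (h : (diagonal v).charpoly = ∏ j, (X - C (d j))) : diagonal v ∈ adjointOrbit n d := by
  rw [charpoly_diagonal] at h
  obtain ⟨σ, rfl⟩ := Equiv.Perm.exists_comp_eq_of_map_univ_val_eq
    (by simpa only [roots_prod_X_sub_C_univ] using congrArg roots h)
  exact diagonal_comp_perm_mem_adjointOrbit d σ

theorem smul_mem_adjointOrbit {d : Fin n → ℂ} {x : Matrix (Fin n) (Fin n) ℂ}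
    (hx : x ∈ adjointOrbit n d) (c : ℂ) : c • x ∈ adjointOrbit n (c • d) := by
  obtain ⟨g, rfl⟩ := hx
  exact ⟨g, by rw [diagonal_smul]; simp⟩

theorem eq_zero_of_mem_adjointOrbit_zero {x : Matrix (Fin n) (Fin n) ℂ}
    (hx : x ∈ adjointOrbit n 0) : x = 0 := by
  obtain ⟨g, rfl⟩ := hx
  simp

theorem isDiag_of_tendsto_sub_diagPart {ι : Type*} {l : Filter ι} [l.NeBot]
    {z : ι → Matrix (Fin n) (Fin n) ℂ} {a : Matrix (Fin n) (Fin n) ℂ} (hz : Tendsto z l (𝓝 a))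
    (hoff : Tendsto (fun k => z k - diagPart (z k)) l (𝓝 0)) : a.IsDiag := by
  have hcont : Continuous fun x : Matrix (Fin n) (Fin n) ℂ => x - diagPart x := by
    unfold diagPart; fun_prop
  have ha : a - diagPart a = 0 := tendsto_nhds_unique ((hcont.tendsto a).comp hz) hoff
  rw [sub_eq_zero.1 ha]
  exact isDiag_diagonal _

theorem mem_adjointOrbit_of_tendsto {ι : Type*} {l : Filter ι} [l.NeBot]
    {z : ι → Matrix (Fin n) (Fin n) ℂ} {e : ι → Fin n → ℂ} {a : Matrix (Fin n) (Fin n) ℂ}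
    {d : Fin n → ℂ} (hz : ∀ k, z k ∈ adjointOrbit n (e k)) (he : Tendsto e l (𝓝 d))
    (hza : Tendsto z l (𝓝 a)) (ha : a.IsDiag) : a ∈ adjointOrbit n d := by
  rw [← ha.diagonal_diag]
  refine diagonal_mem_adjointOrbit_of_charpoly_eq (Polynomial.funext fun t => ?_)
  have hdet_cont : Continuous fun x : Matrix (Fin n) (Fin n) ℂ => (scalar (Fin n) t - x).det := by
    fun_prop
  have hprod_cont : Continuous fun w : Fin n → ℂ => ∏ j, (t - w j) := by fun_prop
  have hdet (k : ι) : (scalar (Fin n) t - z k).det = ∏ j, (t - e k j) := by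
    rw [← eval_charpoly, charpoly_eq_of_mem_adjointOrbit (hz k), eval_prod]
    simp
  have hlim : (scalar (Fin n) t - a).det = ∏ j, (t - d j) :=
    tendsto_nhds_unique ((hdet_cont.tendsto a).comp hza)
      (((hprod_cont.tendsto d).comp he).congr fun k => (hdet k).symm)
  rw [ha.diagonal_diag, eval_charpoly, hlim]
  simp [eval_prod]

theorem exists_subseq_tendsto_isDiag_of_isLittleO {d : Fin n → ℂ}
    {x : ℕ → Matrix (Fin n) (Fin n) ℂ} (hx : ∀ k, x k ∈ adjointOrbit n d)
    (hoff : (fun k => x k - diagPart (x k)) =o[atTop] x) :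
    ∃ y ∈ adjointOrbit n d, y.IsDiag ∧
      ∃ φ : ℕ → ℕ, StrictMono φ ∧ Tendsto (x ∘ φ) atTop (𝓝 y) := by
  set c : ℕ → ℝ := fun k => (1 + ‖x k‖)⁻¹ with hc_def
  have hc_pos (k : ℕ) : 0 < c k := by positivity
  set z : ℕ → Matrix (Fin n) (Fin n) ℂ := fun k => (c k : ℂ) • x k with hz_def
  have hz_norm (k : ℕ) : ‖z k‖ = 1 - c k := by
    rw [hz_def, norm_smul, Complex.norm_real, Real.norm_of_nonneg (hc_pos k).le, hc_def]
    field_simp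
    ring
  have hz_off : Tendsto (fun k => z k - diagPart (z k)) atTop (𝓝 0) := by
    have hx_le : x =O[atTop] fun k => ((1 + ‖x k‖ : ℝ) : ℂ) :=
      isBigO_of_le _ fun k => by
        rw [Complex.norm_real, Real.norm_of_nonneg (by positivity)]
        exact le_add_of_nonneg_left zero_le_one
    refine (hoff.trans_isBigO hx_le).tendsto_inv_smul_nhds_zero.congr fun k => ?_
    simp [hz_def, hc_def, diagPart_smul, smul_sub]
  obtain ⟨a, -, φ, hφ, hza⟩ :=
    (isCompact_closedBall (0 : Matrix (Fin n) (Fin n) ℂ) 1).tendsto_subseq (x := z)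
      fun k => by simpa [hz_norm] using (hc_pos k).le
  have hc_lim : Tendsto (c ∘ φ) atTop (𝓝 (1 - ‖a‖)) :=
    (tendsto_const_nhds.sub hza.norm).congr fun k => by simp [hz_norm]
  have ha_diag : a.IsDiag := isDiag_of_tendsto_sub_diagPart hza (hz_off.comp hφ.tendsto_atTop)
  have ha_mem : a ∈ adjointOrbit n (((1 - ‖a‖ : ℝ) : ℂ) • d) :=
    mem_adjointOrbit_of_tendsto (fun k => smul_mem_adjointOrbit (hx (φ k)) _)
      (((Complex.continuous_ofReal.tendsto _).comp hc_lim).smul_const d) hza ha_diag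
  -- if `x ∘ φ` were unbounded, `a` would have norm `1` and lie in `O(0) = {0}`
  have hc0 : 1 - ‖a‖ ≠ 0 := by
    intro h
    rw [h, Complex.ofReal_zero, zero_smul] at ha_mem
    rw [eq_zero_of_mem_adjointOrbit_zero ha_mem, norm_zero] at h
    norm_num at h
  refine ⟨(((1 - ‖a‖)⁻¹ : ℝ) : ℂ) • a, ?_, ha_diag.smul _, φ, hφ, ?_⟩
  · have h := smul_mem_adjointOrbit ha_mem (((1 - ‖a‖)⁻¹ : ℝ) : ℂ)
    rwa [smul_smul, ← Complex.ofReal_mul, inv_mul_cancel₀ hc0, Complex.ofReal_one, one_smul] at h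
  · have h : Tendsto (fun k => (((c (φ k))⁻¹ : ℝ) : ℂ) • z (φ k)) atTop
        (𝓝 ((((1 - ‖a‖)⁻¹ : ℝ) : ℂ) • a)) :=
      ((Complex.continuous_ofReal.tendsto _).comp (hc_lim.inv₀ hc0)).smul hza
    refine h.congr fun k => ?_
    rw [hz_def, smul_smul, ← Complex.ofReal_mul, inv_mul_cancel₀ (hc_pos _).ne',
      Complex.ofReal_one, one_smul]
    rfl

theorem diagPart_lt_const_mul_offDiagonal_away_from_singularities_general
    (n : ℕ) (d : Fin n → ℂ) :
    ∀ ε > (0 : ℝ), ∃ Γ > (0 : ℝ), ∀ x ∈ adjointOrbit n d,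
      (∀ y ∈ adjointOrbit n d, y.IsDiag → ε < ‖x - y‖) →
      ‖diagPart x‖ < Γ * ‖x - diagPart x‖ := by
  intro ε hε
  by_contra! h
  choose x hx hfar hle using fun k : ℕ => h (k + 1) k.cast_add_one_pos
  have hoff : (fun k => x k - diagPart (x k)) =o[atTop] x := by
    refine isLittleO_of_natCast_mul_norm_le fun k => ?_
    linarith [hle k, norm_le_norm_add_norm_sub (x k) (diagPart (x k))]
  obtain ⟨y, hy, hy_diag, φ, -, hφ⟩ := exists_subseq_tendsto_isDiag_of_isLittleO hx hoff
  have hdist : Tendsto (fun k => ‖x (φ k) - y‖) atTop (𝓝 0) :=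
    tendsto_iff_norm_sub_tendsto_zero.1 hφ
  have hε_nonpos : ε ≤ 0 :=
    ge_of_tendsto hdist (Eventually.of_forall fun k => (hfar (φ k) y hy hy_diag).le)
  linarith

/-- Let `H₀ = diagonal d` be a traceless complex diagonal matrix, `O(H₀)` its adjoint
orbit and `S(H₀)` the set of diagonal matrices lying in `O(H₀)`.  For every `ε > 0`
there is a constant `Γ_ε > 0` such that every `x ∈ O(H₀)` at distance greater than `ε`
from all points of `S(H₀)` satisfies `‖diag(x)‖ < Γ_ε * ‖x - diag(x)‖`: the orbit is
not asymptotic to the Cartan subalgebra of diagonal matrices. -/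
theorem diagPart_lt_const_mul_offDiagonal_away_from_singularities
    (n : ℕ) (d : Fin n → ℂ) (htr : Matrix.trace (Matrix.diagonal d) = 0) :
    ∀ ε > (0 : ℝ), ∃ Γ > (0 : ℝ), ∀ x ∈ adjointOrbit n d,
      (∀ y ∈ adjointOrbit n d, y.IsDiag → ε < ‖x - y‖) →
      ‖diagPart x‖ < Γ * ‖x - diagPart x‖ :=
  diagPart_lt_const_mul_offDiagonal_away_from_singularities_general n d
end

section
/- Let H be an n×n real diagonal matrix and define, for n×n complex matrices x with ⁅x,H⁆ ≠ 0, the vector field Z(x) = ‖⁅x,H⁆‖⁻² · ⁅x, ⁅xᴴ, H⁆⁆. Then there exists a constant M > 0, depending only on the matrix bracket (i.e. satisfying ‖⁅X,Y⁆‖ ≤ M‖X‖‖Y‖ for all X,Y), such that for every x with ⁅x,H⁆ ≠ 0 the map Z is real-differentiable at x and its Fréchet derivative satisfies ‖dZ_x‖ ≤ 2M(‖ad(H)‖ + M‖H‖) · ‖x‖ / ‖⁅x,H⁆‖², where ‖ad(H)‖ is the operator norm of the linear map Y ↦ ⁅H,Y⁆ and ‖dZ_x‖ is the operator norm of the derivative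 of Z at x (as a map of real normed spaces). -/
open Matrix

attribute [local instance] Matrix.frobeniusNormedAddCommGroup Matrix.frobeniusNormedSpace
attribute [local instance] LieRing.ofAssociativeRing

@[reducible] noncomputable def frobeniusMatrixTopology (n : ℕ) : TopologicalSpace (Matrix (Fin n) (Fin n) ℂ) :=
  @UniformSpace.toTopologicalSpace _ (@PseudoMetricSpace.toUniformSpace _
    (@SeminormedAddCommGroup.toPseudoMetricSpace _
      (@NormedAddCommGroup.toSeminormedAddCommGroup _ Matrix.frobeniusNormedAddCommGroup)))

attribute [local instance 2000] frobeniusMatrixTopology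

/-- The real diagonal matrix `H`, viewed as a complex matrix. -/
noncomputable def Hmat (n : ℕ) (h : Fin n → ℝ) : Matrix (Fin n) (Fin n) ℂ :=
  Matrix.diagonal (fun i => (h i : ℂ))

/-- The transversal vector field `Z(x) = ‖⁅x,H⁆‖⁻² • ⁅x, ⁅xᴴ, H⁆⁆`. -/
noncomputable def Zfield (n : ℕ) (h : Fin n → ℝ) :
    Matrix (Fin n) (Fin n) ℂ → Matrix (Fin n) (Fin n) ℂ :=
  fun x => (‖⁅x, Hmat n h⁆‖ ^ 2)⁻¹ • ⁅x, ⁅xᴴ, Hmat n h⁆⁆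

/-! Write `Z = q⁻¹ • g` with `q y = ‖⁅y, H⁆‖²` and `g y = ⁅y, ⁅yᴴ, H⁆⁆`. The quotient rule bounds
`‖dZ_x‖` by `(‖dg_x‖ + 2 ‖ad H‖ ‖g x‖ / ‖⁅x, H⁆‖) / ‖⁅x, H⁆‖²`. Since `H` is Hermitian,
`‖⁅vᴴ, H⁆‖ = ‖⁅v, H⁆‖ ≤ ‖ad H‖ ‖v‖`, so with the Frobenius bracket constant `M = 2` both `dg_x` and
`g x` are controlled by `‖ad H‖`, `‖x‖` and `‖⁅x, H⁆‖`; the leftover factor `‖⁅x, H⁆‖` in the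
numerator is absorbed by `‖⁅x, H⁆‖ ≤ 2 ‖x‖ ‖H‖`, and `‖ad H‖ ≤ 2 ‖H‖` trades part of the `ad H` term
for the `‖H‖` term. -/

/-- The real inner product inducing the Frobenius norm, needed to differentiate `‖·‖²`. -/
noncomputable abbrev frobeniusRealInnerProductSpace (m n : Type*) [Fintype m] [Fintype n] :
    InnerProductSpace ℝ (Matrix m n ℂ) :=
  { inner := fun x y => inner ℝ (WithLp.toLp 2 fun i => WithLp.toLp 2 (x i))
      (WithLp.toLp 2 fun i => WithLp.toLp 2 (y i))
    norm_sq_eq_re_inner := fun x =>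
      norm_sq_eq_re_inner (𝕜 := ℝ) (WithLp.toLp 2 fun i => WithLp.toLp 2 (x i))
    conj_inner_symm := fun x y => inner_conj_symm (𝕜 := ℝ) _ _
    add_left := fun x y z => by
      show inner ℝ (WithLp.toLp 2 fun i => WithLp.toLp 2 ((x + y) i)) _ = _
      rw [← inner_add_left]; rfl
    smul_left := fun x y r => by
      show inner ℝ (WithLp.toLp 2 fun i => WithLp.toLp 2 ((r • x) i)) _ = _
      rw [← inner_smul_left]; rfl }

attribute [local instance] frobeniusRealInnerProductSpace

theorem norm_fderiv_inv_norm_sq_smul_le {E F G : Type*} [NormedAddCommGroup E] [NormedSpace ℝ E]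
    [NormedAddCommGroup F] [InnerProductSpace ℝ F] [NormedAddCommGroup G] [NormedSpace ℝ G]
    {u : E → F} {g : E → G} {x : E}
    (hu : DifferentiableAt ℝ u x) (hg : DifferentiableAt ℝ g x) (hx : u x ≠ 0) :
    DifferentiableAt ℝ (fun y => (‖u y‖ ^ 2)⁻¹ • g y) x ∧
      ‖fderiv ℝ (fun y => (‖u y‖ ^ 2)⁻¹ • g y) x‖ ≤
        (‖fderiv ℝ g x‖ + 2 * ‖fderiv ℝ u x‖ * ‖g x‖ / ‖u x‖) / ‖u x‖ ^ 2 := by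
  set r := ‖u x‖
  have hr : 0 < r := norm_pos_iff.mpr hx
  have hinv : HasFDerivAt (fun y => (‖u y‖ ^ 2)⁻¹)
      ((-((r ^ 2) ^ 2)⁻¹) • 2 • (innerSL ℝ (u x)).comp (fderiv ℝ u x)) x :=
    (hasDerivAt_inv (by positivity)).comp_hasFDerivAt x hu.hasFDerivAt.norm_sq
  have hZ := hinv.smul hg.hasFDerivAt
  refine ⟨hZ.differentiableAt, hZ.fderiv ▸ ?_⟩
  have hinv' : ‖(-((r ^ 2) ^ 2)⁻¹) • 2 • (innerSL ℝ (u x)).comp (fderiv ℝ u x)‖ ≤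
      ((r ^ 2) ^ 2)⁻¹ * (2 * (r * ‖fderiv ℝ u x‖)) := by
    rw [norm_smul, norm_neg, norm_inv, norm_pow, norm_pow, Real.norm_eq_abs, abs_of_pos hr]
    gcongr
    refine norm_nsmul_le.trans ?_
    push_cast
    gcongr
    have := (innerSL ℝ (u x)).opNorm_comp_le (fderiv ℝ u x)
    rwa [innerSL_apply_norm] at this
  calc _ ≤ (r ^ 2)⁻¹ * ‖fderiv ℝ g x‖ + ((r ^ 2) ^ 2)⁻¹ * (2 * (r * ‖fderiv ℝ u x‖)) * ‖g x‖ := by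
        refine (norm_add_le _ _).trans (add_le_add ?_ ?_)
        · rw [norm_smul, norm_inv, norm_pow, Real.norm_eq_abs, abs_of_pos hr]
        · rw [ContinuousLinearMap.norm_smulRight_apply]
          gcongr
    _ = _ := by field_simp

theorem ContinuousLinearMap.norm_fderiv_apply_apply_le {𝕜 E F G : Type*} [NontriviallyNormedField 𝕜]
    [NormedAddCommGroup E] [NormedSpace 𝕜 E] [NormedAddCommGroup F] [NormedSpace 𝕜 F]
    [NormedAddCommGroup G] [NormedSpace 𝕜 G] (B : E →L[𝕜] F →L[𝕜] G) (C : E →L[𝕜] F) (x : E) :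
    ‖fderiv 𝕜 (fun y => B y (C y)) x‖ ≤ ‖B‖ * (‖x‖ * ‖C‖ + ‖C x‖) := by
  have hB : HasFDerivAt (fun y => B y (C y)) _ x :=
    B.hasFDerivAt_of_bilinear (hasFDerivAt_id x) C.hasFDerivAt
  rw [hB.fderiv]
  refine ContinuousLinearMap.opNorm_le_bound _ (by positivity) fun v => ?_
  simp only [_root_.add_apply, ContinuousLinearMap.precompR_apply,
    ContinuousLinearMap.precompL_apply, ContinuousLinearMap.id_apply]
  calc _ ≤ ‖B‖ * ‖x‖ * ‖C v‖ + ‖B‖ * ‖v‖ * ‖C x‖ :=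
        (norm_add_le _ _).trans (add_le_add (B.le_opNorm₂ _ _) (B.le_opNorm₂ _ _))
    _ ≤ ‖B‖ * ‖x‖ * (‖C‖ * ‖v‖) + ‖B‖ * ‖v‖ * ‖C x‖ := by gcongr; exact C.le_opNorm v
    _ = _ := by ring

theorem Matrix.frobenius_norm_lie_le {m 𝕜 : Type*} [Fintype m] [DecidableEq m] [RCLike 𝕜]
    (X Y : Matrix m m 𝕜) : ‖⁅X, Y⁆‖ ≤ 2 * ‖X‖ * ‖Y‖ := by
  rw [Ring.lie_def]
  linarith [norm_sub_le (X * Y) (Y * X), frobenius_norm_mul X Y, frobenius_norm_mul Y X]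

theorem Matrix.IsHermitian.conjTranspose_lie {m α : Type*} [Fintype m] [DecidableEq m] [Ring α]
    [StarRing α] {H : Matrix m m α} (hH : H.IsHermitian) (v : Matrix m m α) :
    ⁅vᴴ, H⁆ = -⁅v, H⁆ᴴ := by
  rw [Ring.lie_def, Ring.lie_def, conjTranspose_sub, conjTranspose_mul, conjTranspose_mul, hH.eq,
    neg_sub]

theorem isHermitian_Hmat (n : ℕ) (h : Fin n → ℝ) : (Hmat n h).IsHermitian :=
  isHermitian_diagonal_of_self_adjoint _ (funext fun i => Complex.conj_ofReal (h i))

section FrobeniusCLM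

variable {n : ℕ}

noncomputable def lieCLM (n : ℕ) :
    Matrix (Fin n) (Fin n) ℂ →L[ℝ] Matrix (Fin n) (Fin n) ℂ →L[ℝ] Matrix (Fin n) (Fin n) ℂ :=
  (LieAlgebra.ad ℝ (Matrix (Fin n) (Fin n) ℂ)).toLinearMap.mkContinuous₂ 2
    frobenius_norm_lie_le

@[simp]
theorem lieCLM_apply (X Y : Matrix (Fin n) (Fin n) ℂ) : lieCLM n X Y = ⁅X, Y⁆ := rfl

theorem norm_lieCLM_le : ‖lieCLM n‖ ≤ 2 :=
  LinearMap.mkContinuous₂_norm_le _ zero_le_two _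

noncomputable def conjTransposeLieCLM (H : Matrix (Fin n) (Fin n) ℂ) :
    Matrix (Fin n) (Fin n) ℂ →L[ℝ] Matrix (Fin n) (Fin n) ℂ :=
  LinearMap.toContinuousLinearMap
    { toFun := fun v => ⁅vᴴ, H⁆
      map_add' := fun a b => by rw [conjTranspose_add, add_lie]
      map_smul' := fun r a => by rw [conjTranspose_smul, star_trivial, smul_lie]; rfl }

theorem norm_toContinuousLinearMap_ad_le (X : Matrix (Fin n) (Fin n) ℂ) :
    ‖LinearMap.toContinuousLinearMap (LieAlgebra.ad ℝ (Matrix (Fin n) (Fin n) ℂ) X)‖ ≤ 2 * ‖X‖ :=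
  ContinuousLinearMap.opNorm_le_bound _ (by positivity) (frobenius_norm_lie_le X)

theorem hasFDerivAt_lie_const (X x : Matrix (Fin n) (Fin n) ℂ) :
    HasFDerivAt (fun y => ⁅y, X⁆)
      (-LinearMap.toContinuousLinearMap (LieAlgebra.ad ℝ (Matrix (Fin n) (Fin n) ℂ) X)) x := by
  convert (-LinearMap.toContinuousLinearMap
    (LieAlgebra.ad ℝ (Matrix (Fin n) (Fin n) ℂ) X)).hasFDerivAt using 1
  funext y
  show ⁅y, X⁆ = -⁅X, y⁆
  rw [← lie_skew]

theorem norm_conjTransposeLieCLM_apply {H : Matrix (Fin n) (Fin n) ℂ} (hH : H.IsHermitian)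
    (v : Matrix (Fin n) (Fin n) ℂ) : ‖conjTransposeLieCLM H v‖ = ‖⁅v, H⁆‖ := by
  rw [show conjTransposeLieCLM H v = ⁅vᴴ, H⁆ from rfl, hH.conjTranspose_lie, norm_neg,
    frobenius_norm_conjTranspose]

theorem norm_conjTransposeLieCLM_le {H : Matrix (Fin n) (Fin n) ℂ} (hH : H.IsHermitian) :
    ‖conjTransposeLieCLM H‖ ≤
      ‖LinearMap.toContinuousLinearMap (LieAlgebra.ad ℝ (Matrix (Fin n) (Fin n) ℂ) H)‖ := by
  refine ContinuousLinearMap.opNorm_le_bound _ (norm_nonneg _) fun v => ?_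
  rw [norm_conjTransposeLieCLM_apply hH, ← norm_neg, lie_skew]
  exact (LinearMap.toContinuousLinearMap (LieAlgebra.ad ℝ _ H)).le_opNorm v

theorem norm_fderiv_lie_conjTransposeLieCLM_le {H : Matrix (Fin n) (Fin n) ℂ}
    (hH : H.IsHermitian) (x : Matrix (Fin n) (Fin n) ℂ) :
    ‖fderiv ℝ (fun y => lieCLM n y (conjTransposeLieCLM H y)) x‖ ≤
      2 * (‖x‖ * ‖LinearMap.toContinuousLinearMap
        (LieAlgebra.ad ℝ (Matrix (Fin n) (Fin n) ℂ) H)‖ + ‖⁅x, H⁆‖) := by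
  refine ((lieCLM n).norm_fderiv_apply_apply_le _ x).trans ?_
  rw [norm_conjTransposeLieCLM_apply hH]
  gcongr
  · exact norm_lieCLM_le
  · exact norm_conjTransposeLieCLM_le hH

end FrobeniusCLM

/-- There is a constant `M > 0` bounding the matrix bracket, `‖⁅X,Y⁆‖ ≤ M ‖X‖ ‖Y‖`,
such that at every point `x` with `⁅x,H⁆ ≠ 0` the vector field `Z` is (real)
differentiable and its Fréchet derivative satisfies
`‖dZ_x‖ ≤ 2 M (‖ad H‖ + M ‖H‖) ‖x‖ / ‖⁅x,H⁆‖²`, where `ad H` is the operator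
`Y ↦ ⁅H,Y⁆`. -/
theorem norm_fderiv_Zfield_le
    (n : ℕ) (h : Fin n → ℝ) :
    ∃ M > (0 : ℝ),
      (∀ X Y : Matrix (Fin n) (Fin n) ℂ, ‖⁅X, Y⁆‖ ≤ M * ‖X‖ * ‖Y‖) ∧
      ∀ x : Matrix (Fin n) (Fin n) ℂ, ⁅x, Hmat n h⁆ ≠ 0 →
        DifferentiableAt ℝ (Zfield n h) x ∧
        ‖fderiv ℝ (Zfield n h) x‖ ≤
          2 * M * (‖LinearMap.toContinuousLinearMap
              (LieAlgebra.ad ℝ (Matrix (Fin n) (Fin n) ℂ) (Hmat n h))‖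
            + M * ‖Hmat n h‖) * ‖x‖ / ‖⁅x, Hmat n h⁆‖ ^ 2 := by
  refine ⟨2, two_pos, frobenius_norm_lie_le, fun x hx => ?_⟩
  set H := Hmat n h
  have hH : H.IsHermitian := isHermitian_Hmat n h
  have hu := hasFDerivAt_lie_const H x
  have hg : DifferentiableAt ℝ (fun y => lieCLM n y (conjTransposeLieCLM H y)) x := by fun_prop
  obtain ⟨hdiff, hbound⟩ := norm_fderiv_inv_norm_sq_smul_le hu.differentiableAt hg hx
  refine ⟨hdiff, hbound.trans ?_⟩
  have hdg := norm_fderiv_lie_conjTransposeLieCLM_le hH x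
  have hgx : ‖lieCLM n x (conjTransposeLieCLM H x)‖ ≤ 2 * ‖x‖ * ‖⁅x, H⁆‖ := by
    rw [lieCLM_apply, ← norm_conjTransposeLieCLM_apply hH x]
    exact frobenius_norm_lie_le _ _
  have hcH := frobenius_norm_lie_le x H
  have hAH := norm_toContinuousLinearMap_ad_le H
  have hA := norm_nonneg (LinearMap.toContinuousLinearMap (LieAlgebra.ad ℝ _ H))
  have hc : 0 < ‖⁅x, H⁆‖ := norm_pos_iff.mpr hx
  rw [hu.fderiv, norm_neg]
  generalize ‖LinearMap.toContinuousLinearMap (LieAlgebra.ad ℝ _ H)‖ = A at *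
  generalize ‖⁅x, H⁆‖ = c at *
  calc _ ≤ (2 * (‖x‖ * A + c) + 2 * A * (2 * ‖x‖ * c) / c) / c ^ 2 := by gcongr
    _ = (6 * A * ‖x‖ + 2 * c) / c ^ 2 := by field_simp; ring
    _ ≤ _ := by gcongr; nlinarith [norm_nonneg x]
end

section
/- Let H be an n×n complex Hermitian matrix (Hᴴ = H). Then for every n×n complex matrix x, trace(H · ⁅x, ⁅xᴴ, H⁆⁆) = ‖⁅x, H⁆‖², where ‖·‖ is the Frobenius norm. (Equivalently: the differential of the height function f_H(x) = trace(xH) evaluated on the transversal vector field equals ‖⁅x,H⁆‖², so that df_H(Z(x)) = 1 where Z(x) = ‖⁅x,H⁆‖⁻²·⁅x,⁅xᴴ,H⁆⁆.) -/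
/-!
Invariance of the trace form, `tr (A ⁅B, C⁆) = tr (⁅A, B⁆ C)`, moves the outer bracket onto `H`,
giving `tr (⁅H, x⁆ ⁅xᴴ, H⁆)`. For Hermitian `H` both factors are, up to sign, `⁅x, H⁆` and its
conjugate transpose, and `tr (A Aᴴ)` is the squared Frobenius norm of `A`.
-/

open Matrix

attribute [local instance] Matrix.frobeniusNormedAddCommGroup

theorem star_lie {A : Type*} [Ring A] [StarRing A] (a b : A) : star ⁅a, b⁆ = ⁅star b, star a⁆ := by
  simp only [Ring.lie_def, star_sub, star_mul]

namespace Matrix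

variable {m n R 𝕜 : Type*} [Fintype m] [Fintype n]

theorem trace_mul_lie [CommRing R] (A B C : Matrix n n R) :
    trace (A * ⁅B, C⁆) = trace (⁅A, B⁆ * C) := by
  simp only [Ring.lie_def, Matrix.mul_sub, Matrix.sub_mul, trace_sub, ← mul_assoc,
    trace_mul_cycle A C B]

theorem frobenius_norm_sq_eq_trace_mul_conjTranspose [RCLike 𝕜] (A : Matrix m n 𝕜) :
    ((‖A‖ ^ 2 : ℝ) : 𝕜) = trace (A * Aᴴ) := by
  simp only [frobenius_norm_def, trace, diag_apply, mul_apply, conjTranspose_apply,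
    RCLike.star_def, RCLike.mul_conj, Real.rpow_two]
  rw [← Real.sqrt_eq_rpow, Real.sq_sqrt (by positivity)]
  simp only [RCLike.ofReal_sum, RCLike.ofReal_pow]

end Matrix

/-- For a Hermitian complex matrix `H` and any complex matrix `x`,
`trace (H * ⁅x, ⁅xᴴ, H⁆⁆) = ‖⁅x, H⁆‖²` (Frobenius norm): the differential of the
height function `f_H(x) = trace (x * H)` evaluated on the transversal vector field
equals `‖⁅x,H⁆‖²`, so that `df_H (Z x) = 1` where
`Z x = ‖⁅x,H⁆‖⁻² • ⁅x, ⁅xᴴ, H⁆⁆`. -/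
theorem trace_H_mul_bracket_eq_sq_norm_bracket
    (n : ℕ) (H : Matrix (Fin n) (Fin n) ℂ) (hH : H.IsHermitian) :
    ∀ x : Matrix (Fin n) (Fin n) ℂ,
      Matrix.trace (H * ⁅x, ⁅xᴴ, H⁆⁆) = (‖⁅x, H⁆‖ ^ 2 : ℂ) := by
  intro x
  have hskew : ⁅x, H⁆ᴴ = ⁅H, xᴴ⁆ := by
    simpa only [star_eq_conjTranspose, hH.eq] using star_lie x H
  calc trace (H * ⁅x, ⁅xᴴ, H⁆⁆)
      = trace (⁅H, x⁆ * ⁅xᴴ, H⁆) := trace_mul_lie _ _ _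
    _ = trace (⁅x, H⁆ * ⁅x, H⁆ᴴ) := by
      rw [hskew, ← neg_mul_neg]
      simp only [Ring.lie_def, neg_sub]
    _ = (‖⁅x, H⁆‖ ^ 2 : ℂ) := by
      exact_mod_cast (frobenius_norm_sq_eq_trace_mul_conjTranspose _).symm
end

section
/- Let S be a 2×2 complex matrix that is Hermitian (Sᴴ = S), has trace 0, and satisfies S·S = 1 (so S lies in the sphere Y = O(H) ∩ i·su(2) inside the adjoint orbit of H = diag(1,−1)). Then for all traceless anti-Hermitian 2×2 matrices A, B (i.e. A, B ∈ su(2)): Im(trace(⁅S,A⁆ · (⁅S,B⁆)ᴴ)) = 0. (Hence the tangent vectors ⁅S,A⁆ to Y are isotropic for the symplectic form Ω(X,Y) = Im trace(X·Yᴴ), so the sphere Y = {x² + y² + z² = 1} is a Lagrangian submanifold of the orbit.) -/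
open Matrix

/-- Let `S` be a `2×2` Hermitian, traceless complex matrix with `S² = 1` (a point of
the sphere `Y = O(diag(1,−1)) ∩ i·su(2)` inside the adjoint orbit).  Then for all
traceless anti-Hermitian matrices `A, B ∈ su(2)`, the symplectic form
`Ω(X,Y) = Im trace (X * Yᴴ)` vanishes on the tangent vectors `⁅S,A⁆, ⁅S,B⁆` to `Y`:
`Im trace (⁅S,A⁆ * ⁅S,B⁆ᴴ) = 0`.  Hence the sphere `Y` is Lagrangian. -/
theorem sphere_isotropic_in_sl2_orbit
    (S : Matrix (Fin 2) (Fin 2) ℂ)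
    (hS : Sᴴ = S) (hStr : Matrix.trace S = 0) (hS2 : S * S = 1) :
    ∀ A B : Matrix (Fin 2) (Fin 2) ℂ,
      Aᴴ = -A → Matrix.trace A = 0 → Bᴴ = -B → Matrix.trace B = 0 →
      (Matrix.trace (⁅S, A⁆ * (⁅S, B⁆)ᴴ)).im = 0 := by
  intro A B hA _ hB _
  have hAc : (⁅S, A⁆)ᴴ = ⁅S, A⁆ := by
    simp only [Ring.lie_def, conjTranspose_sub, conjTranspose_mul, hS, hA]
    noncomm_ring
  have hBc : (⁅S, B⁆)ᴴ = ⁅S, B⁆ := by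
    simp only [Ring.lie_def, conjTranspose_sub, conjTranspose_mul, hS, hB]
    noncomm_ring
  have key : (starRingEnd ℂ) (Matrix.trace (⁅S, A⁆ * (⁅S, B⁆)ᴴ))
      = Matrix.trace (⁅S, A⁆ * (⁅S, B⁆)ᴴ) := by
    calc (starRingEnd ℂ) (Matrix.trace (⁅S, A⁆ * (⁅S, B⁆)ᴴ))
        = Matrix.trace ((⁅S, A⁆ * (⁅S, B⁆)ᴴ)ᴴ) := (Matrix.trace_conjTranspose _).symm
      _ = Matrix.trace (⁅S, B⁆ * (⁅S, A⁆)ᴴ) := by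
          rw [conjTranspose_mul, conjTranspose_conjTranspose]
      _ = Matrix.trace (⁅S, A⁆ * (⁅S, B⁆)ᴴ) := by
          rw [hAc, hBc, Matrix.trace_mul_comm]
  exact Complex.conj_eq_iff_im.mp key
end
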